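/- arXiv:2005.04882 — 2 statements merged into one kernel-verified Lean document; each statement's English description precedes it below -/
import Mathlib

section
/- Let (M, g(τ)) be a backward (-K)-Ricci flow (h = Ric + Kg, K ≥ 0) whose scalar curvature satisfies the evolution equation ∂_τ S = -ΔS - 2‖Ric‖² - 2KS, and assume the contracted second Bianchi identity 2 div Ric = ∇S. Then for every vector field V, the Müller quantity D(V) := -∂_τ H - ΔH - 2‖h‖² + 4 div h(V) - 2⟨∇H, V⟩ + 2Ric(V,V) - 2h(V,V) equals -2K(H + ‖V‖²), where H = tr h = S + nK. -/
/-- Along a backward `(-K)`-Ricci flow (`h = Ric + K g`), assuming the evolution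
equation `∂_τ S = -ΔS - 2‖Ric‖² - 2KS` and the contracted second Bianchi
identity `2 div Ric = ∇S`, the Müller quantity
`D(V) = -∂_τ H - ΔH - 2‖h‖² + 4 div h(V) - 2⟨∇H,V⟩ + 2Ric(V,V) - 2h(V,V)`
equals `-2K(H + ‖V‖²)` for all vector fields `V`, where `H = tr h = S + nK`. -/
theorem muller_quantity_K_ricci_flow {E : Type*} [NormedAddCommGroup E]
    [InnerProductSpace ℝ E]
    (n : ℕ) (K S dτS ΔS dτH ΔH normRic2 normh2 H : ℝ)
    (ric hbil divRic divh gradS gradH : E → ℝ)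
    (hK : 0 ≤ K)
    (hH : H = S + n * K)
    (hdτH : dτH = dτS) (hΔH : ΔH = ΔS)
    (hnormh : normh2 = normRic2 + 2 * K * S + n * K ^ 2)
    (hdivh : ∀ v, divh v = divRic v)
    (hgradH : ∀ v, gradH v = gradS v)
    (hBianchi : ∀ v, 2 * divRic v = gradS v)
    (hEvol : dτS = -ΔS - 2 * normRic2 - 2 * K * S)
    (hR : ∀ v : E, ric v - hbil v = -K * ‖v‖ ^ 2) :
    ∀ v : E, -dτH - ΔH - 2 * normh2 + 4 * divh v - 2 * gradH v
      + 2 * ric v - 2 * hbil v = -2 * K * (H + ‖v‖ ^ 2) := by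
  intro v
  have h1 := hR v
  have h2 := hBianchi v
  have h3 := hdivh v
  have h4 := hgradH v
  subst hH hdτH hΔH hnormh hEvol
  nlinarith [h1, h2, h3, h4]
end

section
/- Let K ∈ ℝ, K ≠ 0, and suppose a family of smooth functions S̄(s) on M satisfies, for an associated Ricci flow reparametrization s = σ⁻¹(t) with σ⁻¹(t) = (1-e^{-2Kt})/(2K), the trace Harnack inequality ∂_s S̄ + S̄/s - 2ḡ(∇̄S̄, V̄) + 2 Ric̄(V̄, V̄) ≥ 0 for all vector fields V̄ and s > 0, where S̄ = e^{2Kσ(s)}S, ḡ = e^{-2Kσ(s)}g, ∇̄S̄ and Ric̄ correspond to ḡ. Then the original flow satisfies ∂_t S + 2KS/(1-e^{-2Kt}) - 2g(∇S, V) + 2Ric(V,V) ≥ 0 for all vector fields V and t > 0. -/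
open Real

/-! Evaluate the rescaled inequality at `V̄ = e^{2Kt} V`. The gradient and Ricci terms become
`e^{4Kt}` times those of the original expression, and the extra `e^{4Kt}·2KS` in `∂_s S̄` combines
with `S̄/s` into `e^{4Kt}·2KS/(1 - e^{-2Kt})`. So the barred expression is `e^{4Kt} > 0` times the
original one. -/

lemma sq_add_div_one_sub_inv {𝕜 : Type*} [Field 𝕜] {a : 𝕜} (ha : a ≠ 1) :
    a ^ 2 + a / (1 - a⁻¹) = a ^ 2 / (1 - a⁻¹) := by
  rcases eq_or_ne a 0 with rfl | ha0
  · simp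
  have hd : 1 - a⁻¹ ≠ 0 := sub_ne_zero.mpr (Ne.symm (inv_ne_one.mpr ha))
  field_simp
  ring

lemma exp_four_mul_mul_eq_sq (K t : ℝ) : exp (4 * K * t) = exp (2 * K * t) ^ 2 := by
  rw [sq, ← exp_add]
  ring_nf

lemma harnack_scalar_terms_rescale (K : ℝ) {t : ℝ} (ht : t ≠ 0) (S : ℝ) :
    exp (4 * K * t) * (2 * K * S) + exp (2 * K * t) * S / ((1 - exp (-(2 * K * t))) / (2 * K))
      = exp (4 * K * t) * (2 * K * S / (1 - exp (-(2 * K * t)))) := by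
  rcases eq_or_ne K 0 with rfl | hK
  -- for `K = 0` both sides vanish, the divisions by `0` included
  · simp
  have ha : exp (2 * K * t) ≠ 1 := by
    rw [Ne, exp_eq_one_iff]
    exact mul_ne_zero (mul_ne_zero two_ne_zero hK) ht
  rw [exp_four_mul_mul_eq_sq, exp_neg, div_div_eq_mul_div]
  calc _ = 2 * K * S * (exp (2 * K * t) ^ 2 + exp (2 * K * t) / (1 - (exp (2 * K * t))⁻¹)) := by
          ring
    _ = _ := by rw [sq_add_div_one_sub_inv ha]; ring

theorem trace_harnack_rescaled_general {E : Type*} [NormedAddCommGroup E]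
    [NormedSpace ℝ E]
    (K : ℝ)
    (S dtS : ℝ → ℝ) (gradS ric : ℝ → E → ℝ)
    (hgradlin : ∀ t (c : ℝ) (v : E), gradS t (c • v) = c * gradS t v)
    (hricquad : ∀ t (c : ℝ) (v : E), ric t (c • v) = c ^ 2 * ric t v)
    (σinv : ℝ → ℝ)
    (hσinv : ∀ t, σinv t = (1 - Real.exp (-(2 * K * t))) / (2 * K))
    (Sbar dsSbar : ℝ → ℝ) (gbar ricbar : ℝ → E → ℝ)
    (hSbar : ∀ t, Sbar t = Real.exp (2 * K * t) * S t)
    (hdsSbar : ∀ t, dsSbar t = Real.exp (4 * K * t) * (2 * K * S t + dtS t))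
    (hgbar : ∀ t v, gbar t v = Real.exp (2 * K * t) * gradS t v)
    (hricbar : ∀ t (v : E), ricbar t v = ric t v)
    (hHarnack : ∀ t, 0 < t → ∀ v : E,
      dsSbar t + Sbar t / σinv t - 2 * gbar t v + 2 * ricbar t v ≥ 0) :
    ∀ t, 0 < t → ∀ v : E,
      dtS t + 2 * K * S t / (1 - Real.exp (-(2 * K * t)))
        - 2 * gradS t v + 2 * ric t v ≥ 0 := by
  intro t ht v
  have h := hHarnack t ht (exp (2 * K * t) • v)
  rw [hdsSbar, hSbar, hσinv, hgbar, hgradlin, hricbar, hricquad] at h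
  have hrescale : exp (4 * K * t) * (2 * K * S t + dtS t)
      + exp (2 * K * t) * S t / ((1 - exp (-(2 * K * t))) / (2 * K))
      - 2 * (exp (2 * K * t) * (exp (2 * K * t) * gradS t v)) + 2 * (exp (2 * K * t) ^ 2 * ric t v)
      = exp (4 * K * t) * (dtS t + 2 * K * S t / (1 - exp (-(2 * K * t)))
        - 2 * gradS t v + 2 * ric t v) := by
    have := harnack_scalar_terms_rescale K ht.ne' (S t)
    rw [exp_four_mul_mul_eq_sq] at this ⊢
    linear_combination this
  rw [hrescale] at h
  exact (mul_nonneg_iff_of_pos_left (exp_pos _)).mp h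

/-- Translation of the trace Harnack inequality under the scaling
`ḡ = e^{-2Kσ(s)} g`, `s = σ⁻¹(t) = (1-e^{-2Kt})/(2K)`: if the barred quantities
`S̄ = e^{2Kt}S`, `∂_s S̄ = e^{4Kt}(2KS + ∂_t S)`, `ḡ(∇̄S̄, V̄) = e^{2Kt} g(∇S, V̄)`,
`Ric̄(V̄,V̄) = Ric(V̄,V̄)` satisfy
`∂_s S̄ + S̄/s - 2ḡ(∇̄S̄,V̄) + 2Ric̄(V̄,V̄) ≥ 0` for all `V̄` and `t > 0`, then
`∂_t S + 2KS/(1-e^{-2Kt}) - 2g(∇S,V) + 2Ric(V,V) ≥ 0` for all `V` and `t > 0`. -/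
theorem trace_harnack_rescaled {E : Type*} [NormedAddCommGroup E]
    [NormedSpace ℝ E]
    (K : ℝ) (hK : K ≠ 0)
    (S dtS : ℝ → ℝ) (gradS ric : ℝ → E → ℝ)
    (hgradlin : ∀ t (c : ℝ) (v : E), gradS t (c • v) = c * gradS t v)
    (hricquad : ∀ t (c : ℝ) (v : E), ric t (c • v) = c ^ 2 * ric t v)
    (σinv : ℝ → ℝ)
    (hσinv : ∀ t, σinv t = (1 - Real.exp (-(2 * K * t))) / (2 * K))
    (Sbar dsSbar : ℝ → ℝ) (gbar ricbar : ℝ → E → ℝ)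
    (hSbar : ∀ t, Sbar t = Real.exp (2 * K * t) * S t)
    (hdsSbar : ∀ t, dsSbar t = Real.exp (4 * K * t) * (2 * K * S t + dtS t))
    (hgbar : ∀ t v, gbar t v = Real.exp (2 * K * t) * gradS t v)
    (hricbar : ∀ t (v : E), ricbar t v = ric t v)
    (hHarnack : ∀ t, 0 < t → ∀ v : E,
      dsSbar t + Sbar t / σinv t - 2 * gbar t v + 2 * ricbar t v ≥ 0) :
    ∀ t, 0 < t → ∀ v : E,
      dtS t + 2 * K * S t / (1 - Real.exp (-(2 * K * t)))
        - 2 * gradS t v + 2 * ric t v ≥ 0 :=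
  trace_harnack_rescaled_general K S dtS gradS ric hgradlin hricquad σinv hσinv Sbar dsSbar gbar
    ricbar hSbar hdsSbar hgbar hricbar hHarnack
end
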